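/- arXiv:math/0610936 — 2 statements merged into one kernel-verified Lean document; each statement's English description precedes it below -/
import Mathlib

section
/- The group with presentation ⟨x, y, z | xyx⁻¹ = y², yzy⁻¹ = z², zxz⁻¹ = x²⟩ is the trivial group. -/
/-- The relators of the Higman group on 3 generators:
`x y x⁻¹ y⁻²`, `y z y⁻¹ z⁻²`, `z x z⁻¹ x⁻²` with `x = 0`, `y = 1`, `z = 2`. -/
def higman3Rels : Set (FreeGroup (Fin 3)) :=
  { FreeGroup.of 0 * FreeGroup.of 1 * (FreeGroup.of 0)⁻¹ * (FreeGroup.of 1)⁻¹ ^ 2,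
    FreeGroup.of 1 * FreeGroup.of 2 * (FreeGroup.of 1)⁻¹ * (FreeGroup.of 2)⁻¹ ^ 2,
    FreeGroup.of 2 * FreeGroup.of 0 * (FreeGroup.of 2)⁻¹ * (FreeGroup.of 0)⁻¹ ^ 2 }

theorem higman_aux {G : Type*} [Group G] (x y z : G)
    (h1 : x * y * x⁻¹ * y⁻¹ * y⁻¹ = 1) (h2 : y * z * y⁻¹ * z⁻¹ * z⁻¹ = 1)
    (h3 : z * x * z⁻¹ * x⁻¹ * x⁻¹ = 1) : x = 1 ∧ y = 1 ∧ z = 1 := by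
  have hy3 : y = x * x * x := by
    have key : y =
      (y * (y * z * y⁻¹ * z⁻¹ * z⁻¹) * (y)⁻¹)⁻¹ *
      (y * (x * y * x⁻¹ * y⁻¹ * y⁻¹) * (y)⁻¹)⁻¹ *
      (y * x * y * x⁻¹ * y⁻¹ * (y * z * y⁻¹ * z⁻¹ * z⁻¹) * (y * x * y * x⁻¹ * y⁻¹)⁻¹)⁻¹ *
      (y * x * y * x⁻¹ * (z * x * z⁻¹ * x⁻¹ * x⁻¹) * (y * x * y * x⁻¹)⁻¹) *
      (y * x * y * x * z * y⁻¹ * x⁻¹ * (x * y * x⁻¹ * y⁻¹ * y⁻¹) * (y * x * y * x * z * y⁻¹ * x⁻¹)⁻¹) *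
      (y * x * y * x * z * y⁻¹ * x⁻¹ * y * z⁻¹ * y⁻¹ * (y * z * y⁻¹ * z⁻¹ * z⁻¹) * (y * x * y * x * z * y⁻¹ * x⁻¹ * y * z⁻¹ * y⁻¹)⁻¹)⁻¹ *
      (y * x * y * x * y⁻¹ * (y * z * y⁻¹ * z⁻¹ * z⁻¹) * (y * x * y * x * y⁻¹)⁻¹) *
      (y * x * y * x * y⁻¹ * x⁻¹ * (x * y * x⁻¹ * y⁻¹ * y⁻¹) * (y * x * y * x * y⁻¹ * x⁻¹)⁻¹)⁻¹ *
      (y * x * y⁻¹ * x * z * z * x⁻¹ * z⁻¹ * (z * x * z⁻¹ * x⁻¹ * x⁻¹) * (y * x * y⁻¹ * x * z * z * x⁻¹ * z⁻¹)⁻¹)⁻¹ *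
      (y * x * y⁻¹ * x⁻¹ * (z * x * z⁻¹ * x⁻¹ * x⁻¹) * (y * x * y⁻¹ * x⁻¹)⁻¹)⁻¹ *
      (y * x * y⁻¹ * x⁻¹ * z * x⁻¹ * z⁻¹ * (z * x * z⁻¹ * x⁻¹ * x⁻¹) * (y * x * y⁻¹ * x⁻¹ * z * x⁻¹ * z⁻¹)⁻¹)⁻¹ *
      (y * x * y⁻¹ * x⁻¹ * (x * y * x⁻¹ * y⁻¹ * y⁻¹) * (y * x * y⁻¹ * x⁻¹)⁻¹)⁻¹ *
      (y⁻¹ * x⁻¹ * z * x⁻¹ * z⁻¹ * (z * x * z⁻¹ * x⁻¹ * x⁻¹) * (y⁻¹ * x⁻¹ * z * x⁻¹ * z⁻¹)⁻¹) *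
      (y⁻¹ * x⁻¹ * (z * x * z⁻¹ * x⁻¹ * x⁻¹) * (y⁻¹ * x⁻¹)⁻¹) *
      (y⁻¹ * x * z * z * x⁻¹ * z⁻¹ * (z * x * z⁻¹ * x⁻¹ * x⁻¹) * (y⁻¹ * x * z * z * x⁻¹ * z⁻¹)⁻¹) *
      (y * x * y⁻¹ * x⁻¹ * (x * y * x⁻¹ * y⁻¹ * y⁻¹) * (y * x * y⁻¹ * x⁻¹)⁻¹) *
      (y * x * y⁻¹ * (y * z * y⁻¹ * z⁻¹ * z⁻¹) * (y * x * y⁻¹)⁻¹)⁻¹ *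
      (y * x * z * y⁻¹ * x⁻¹ * y * z⁻¹ * y⁻¹ * (y * z * y⁻¹ * z⁻¹ * z⁻¹) * (y * x * z * y⁻¹ * x⁻¹ * y * z⁻¹ * y⁻¹)⁻¹) *
      (y * x * z * y⁻¹ * x⁻¹ * (x * y * x⁻¹ * y⁻¹ * y⁻¹) * (y * x * z * y⁻¹ * x⁻¹)⁻¹)⁻¹ *
      (y * x⁻¹ * (z * x * z⁻¹ * x⁻¹ * x⁻¹) * (y * x⁻¹)⁻¹)⁻¹ *
      (y * x⁻¹ * y⁻¹ * (y * z * y⁻¹ * z⁻¹ * z⁻¹) * (y * x⁻¹ * y⁻¹)⁻¹) *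
      (x⁻¹ * (x * y * x⁻¹ * y⁻¹ * y⁻¹) * (x⁻¹)⁻¹) *
      (x⁻¹ * (y * z * y⁻¹ * z⁻¹ * z⁻¹) * (x⁻¹)⁻¹) *
      (x⁻¹ * z * (z * x * z⁻¹ * x⁻¹ * x⁻¹) * (x⁻¹ * z)⁻¹) *
      (x⁻¹ * z * x * z⁻¹ * (z * x * z⁻¹ * x⁻¹ * x⁻¹) * (x⁻¹ * z * x * z⁻¹)⁻¹) *
      (x⁻¹ * (z * x * z⁻¹ * x⁻¹ * x⁻¹) * (x⁻¹)⁻¹) *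
      (x * x * x) := by group
    rw [h1, h2, h3] at key
    rw [key]; group
  have e1 : x * y * x⁻¹ = y * y := by
    have : x * y * x⁻¹ = (x * y * x⁻¹ * y⁻¹ * y⁻¹) * (y * y) := by group
    rw [this, h1, one_mul]
  have e2 : x * y * x⁻¹ = y := by rw [hy3]; group
  have hy : y = 1 := by
    have : y * y = y * 1 := by rw [mul_one, ← e1, e2]
    exact mul_left_cancel this
  have hz : z = 1 := by
    have hzi : z⁻¹ = 1 := by
      calc z⁻¹ = y * z * y⁻¹ * z⁻¹ * z⁻¹ := by rw [hy]; group
        _ = 1 := h2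
    exact inv_eq_one.mp hzi
  have hx : x = 1 := by
    have hxi : x⁻¹ = 1 := by
      calc x⁻¹ = z * x * z⁻¹ * x⁻¹ * x⁻¹ := by rw [hz]; group
        _ = 1 := h3
    exact inv_eq_one.mp hxi
  exact ⟨hx, hy, hz⟩

theorem higman3_trivial : ∀ g : PresentedGroup higman3Rels, g = 1 := by
  have rel : ∀ r ∈ higman3Rels, (QuotientGroup.mk r : PresentedGroup higman3Rels) = 1 := by
    intro r hr
    exact (QuotientGroup.eq_one_iff r).mpr (Subgroup.subset_normalClosure hr)
  set φ : FreeGroup (Fin 3) →* PresentedGroup higman3Rels :=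
    QuotientGroup.mk' (Subgroup.normalClosure higman3Rels) with hφ
  have h1 : φ (FreeGroup.of 0 * FreeGroup.of 1 * (FreeGroup.of 0)⁻¹ * (FreeGroup.of 1)⁻¹ ^ 2) = 1 :=
    rel _ (by left; rfl)
  have h2 : φ (FreeGroup.of 1 * FreeGroup.of 2 * (FreeGroup.of 1)⁻¹ * (FreeGroup.of 2)⁻¹ ^ 2) = 1 :=
    rel _ (by right; left; rfl)
  have h3 : φ (FreeGroup.of 2 * FreeGroup.of 0 * (FreeGroup.of 2)⁻¹ * (FreeGroup.of 0)⁻¹ ^ 2) = 1 :=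
    rel _ (by right; right; rfl)
  simp only [map_mul, map_inv, map_pow] at h1 h2 h3
  have h1' : φ (FreeGroup.of 0) * φ (FreeGroup.of 1) * (φ (FreeGroup.of 0))⁻¹ *
      (φ (FreeGroup.of 1))⁻¹ * (φ (FreeGroup.of 1))⁻¹ = 1 := by
    rw [← h1]; group
  have h2' : φ (FreeGroup.of 1) * φ (FreeGroup.of 2) * (φ (FreeGroup.of 1))⁻¹ *
      (φ (FreeGroup.of 2))⁻¹ * (φ (FreeGroup.of 2))⁻¹ = 1 := by
    rw [← h2]; group
  have h3' : φ (FreeGroup.of 2) * φ (FreeGroup.of 0) * (φ (FreeGroup.of 2))⁻¹ *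
      (φ (FreeGroup.of 0))⁻¹ * (φ (FreeGroup.of 0))⁻¹ = 1 := by
    rw [← h3]; group
  obtain ⟨hx, hy, hz⟩ := higman_aux _ _ _ h1' h2' h3'
  have hofs : ∀ i : Fin 3, φ (FreeGroup.of i) = 1 := by
    intro i
    fin_cases i
    · exact hx
    · exact hy
    · exact hz
  intro g
  obtain ⟨w, rfl⟩ := QuotientGroup.mk'_surjective (Subgroup.normalClosure higman3Rels) g
  show φ w = 1
  induction w using FreeGroup.induction_on with
  | C1 => exact map_one φ
  | of i => exact hofs i
  | inv_of i h => rw [map_inv, h, inv_one]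
  | mul a b ha hb => rw [map_mul, ha, hb, one_mul]
end

section
/- Let 1 → K → G →^π F → 1 be a split short exact sequence of groups with section s : F → G (a homomorphism with π ∘ s = id), and let S ⊆ G be a generating set of G. Then the kernel K is generated by the set { s(f) · x · s(f · π(x))⁻¹ : f ∈ F, x ∈ S }. -/
/-!
Every `g ∈ G` satisfies `s f * g * (s (f * π g))⁻¹ ∈ K'` for all `f`, where `K'` is the subgroup
generated by the Schreier elements: the expression is multiplicative in `g` once `f` is moved along
by `π`, so it suffices to check it on `S`, where it is a generator. Taking `f = 1` and `g ∈ ker π`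
gives `g ∈ K'`; conversely the generators lie in `ker π` because `π ∘ s = id`.
-/

namespace Subgroup

variable {G F : Type*} [Group G] [Group F]

def schreierGenerators (π : G →* F) (s : F → G) (S : Set G) : Set G :=
  {g | ∃ f : F, ∃ x ∈ S, g = s f * x * (s (f * π x))⁻¹}

theorem mul_mul_inv_mem_closure_schreierGenerators (π : G →* F) (s : F → G) {S : Set G}
    {g : G} (hg : g ∈ closure S) (f : F) :
    s f * g * (s (f * π g))⁻¹ ∈ closure (schreierGenerators π s S) := by
  induction hg using closure_induction generalizing f with
  | mem x hx => exact subset_closure ⟨f, x, hx, rfl⟩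
  | one => simp
  | mul a b _ _ ha hb =>
    have split : s f * (a * b) * (s (f * π (a * b)))⁻¹ =
        (s f * a * (s (f * π a))⁻¹) * (s (f * π a) * b * (s (f * π a * π b))⁻¹) := by
      simp [mul_assoc]
    rw [split]
    exact mul_mem (ha f) (hb (f * π a))
  | inv a _ ha =>
    have split : s f * a⁻¹ * (s (f * π a⁻¹))⁻¹ =
        (s (f * π a⁻¹) * a * (s (f * π a⁻¹ * π a))⁻¹)⁻¹ := by
      simp [mul_assoc]
    rw [split]
    exact inv_mem (ha (f * π a⁻¹))

theorem closure_schreierGenerators_le_ker (π : G →* F) {s : F → G}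
    (hs : Function.LeftInverse π s) (S : Set G) :
    closure (schreierGenerators π s S) ≤ π.ker := by
  rw [closure_le]
  rintro _ ⟨f, x, -, rfl⟩
  simp [MonoidHom.mem_ker, hs _]

theorem closure_schreierGenerators_eq_ker (π : G →* F) (s : F →* G)
    (hs : Function.LeftInverse π s) {S : Set G} (hS : closure S = ⊤) :
    closure (schreierGenerators π s S) = π.ker := by
  refine le_antisymm (closure_schreierGenerators_le_ker π hs S) fun g hg => ?_
  have hg_mem := mul_mul_inv_mem_closure_schreierGenerators π s (hS ▸ mem_top g) 1
  rwa [(MonoidHom.mem_ker).mp hg, one_mul, map_one, one_mul, inv_one, mul_one] at hg_mem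

end Subgroup

theorem kernel_generated_of_split_general {G F : Type*} [Group G] [Group F]
    (π : G →* F) (s : F →* G)
    (hs : π.comp s = MonoidHom.id F) (S : Set G)
    (hS : Subgroup.closure S = ⊤) :
    Subgroup.closure
        {g : G | ∃ f : F, ∃ x ∈ S, g = s f * x * (s (f * π x))⁻¹} = π.ker :=
  Subgroup.closure_schreierGenerators_eq_ker π s (fun f => DFunLike.congr_fun hs f) hS

/-- Schreier-type generation of the kernel of a split surjection: if
`π : G → F` is surjective with section `s` and `S` generates `G`, then the
elements `s(f)·x·s(f·π(x))⁻¹` for `f ∈ F`, `x ∈ S` generate `ker π`. -/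
theorem kernel_generated_of_split {G F : Type*} [Group G] [Group F]
    (π : G →* F) (hπ : Function.Surjective π) (s : F →* G)
    (hs : π.comp s = MonoidHom.id F) (S : Set G)
    (hS : Subgroup.closure S = ⊤) :
    Subgroup.closure
        {g : G | ∃ f : F, ∃ x ∈ S, g = s f * x * (s (f * π x))⁻¹} = π.ker :=
  kernel_generated_of_split_general π s hs S hS
end
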